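/- Let κ be a strongly inaccessible cardinal. For every X ∈ [κ]^κ, the set A_X = {x ∈ 2^κ : x(α)=0 for all α ∈ κ∖X} is a closed subset of 2^κ which is not κ-strongly null. -/

import Mathlib

noncomputable section

open Cardinal Set

namespace GenSp

/-- The index set: a canonical type of order type `κ.ord`. -/
abbrev I (κ : Cardinal.{0}) : Type := κ.ord.ToType

variable (κ : Cardinal.{0}) (A : Type)

/-- The generalized space `A^κ`. -/
abbrev Sp : Type := I κ → A

/-- The basic clopen set `[x ↾ ξ]`: all functions agreeing with `x` below `ξ`. -/
def cyl (x : Sp κ A) (ξ : I κ) : Set (Sp κ A) := {y | ∀ β < ξ, y β = x β}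

/-- The bounded topology on `A^κ`, generated by the basic clopen sets. -/
def bt : TopologicalSpace (Sp κ A) :=
  .generateFrom {S | ∃ x ξ, S = cyl κ A x ξ}

/-- Open in the bounded topology. -/
def OpenK (s : Set (Sp κ A)) : Prop := @IsOpen _ (bt κ A) s

/-- Closed in the bounded topology. -/
def ClosedK (s : Set (Sp κ A)) : Prop := @IsClosed _ (bt κ A) s

/-- Nowhere dense in the bounded topology. -/
def NwdK (s : Set (Sp κ A)) : Prop := @IsNowhereDense _ (bt κ A) s

/-- κ-meagre: a union of (at most) κ nowhere dense sets. -/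
def MeagreK (s : Set (Sp κ A)) : Prop :=
  ∃ f : I κ → Set (Sp κ A), (∀ i, NwdK κ A (f i)) ∧ s = ⋃ i, f i

/-- κ-strongly null set. -/
def SNullK (S : Set (Sp κ A)) : Prop :=
  ∀ ξ : I κ → I κ, ∃ a : I κ → Sp κ A, S ⊆ ⋃ α, cyl κ A (a α) (ξ α)

/-- Coordinatewise addition over `ℤ₂` (translation by `x`). -/
def xadd (x y : Sp κ Bool) : Sp κ Bool := fun i => xor (x i) (y i)

/-- The covering number of the κ-meagre ideal. -/
def covM : Cardinal :=
  sInf {c | ∃ 𝒜 : Set (Set (Sp κ A)), #𝒜 = c ∧ (∀ s ∈ 𝒜, MeagreK κ A s) ∧ ⋃₀ 𝒜 = Set.univ}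

/-- The cofinality of the κ-meagre ideal. -/
def cofM : Cardinal :=
  sInf {c | ∃ 𝒜 : Set (Set (Sp κ A)), #𝒜 = c ∧ (∀ s ∈ 𝒜, MeagreK κ A s) ∧
    ∀ t, MeagreK κ A t → ∃ s ∈ 𝒜, t ⊆ s}

/-- κ is weakly compact: uncountable and with the partition property κ → (κ)²₂. -/
def IsWeaklyCompact (κ : Cardinal.{0}) : Prop :=
  ℵ₀ < κ ∧ ∀ c : I κ → I κ → Bool, ∃ H : Set (I κ), #H = κ ∧
    ∃ b : Bool, ∀ i ∈ H, ∀ j ∈ H, i < j → c i j = b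

/-- `S` is κ-meagre relative to `P` (in the subspace topology). -/
def MeagreInK (P S : Set (Sp κ A)) : Prop :=
  ∃ f : I κ → Set P,
    (∀ i, @IsNowhereDense _ (TopologicalSpace.induced Subtype.val (bt κ A)) (f i)) ∧
    {x : P | (x : Sp κ A) ∈ S} = ⋃ i, f i

/-- Perfect set in the bounded topology. -/
def PerfK (P : Set (Sp κ A)) : Prop := @Perfect _ (bt κ A) P

/-- Perfectly κ-meagre set. -/
def PMeagreK (S : Set (Sp κ A)) : Prop := ∀ P, PerfK κ A P → MeagreInK κ A P S

/-- κ-λ-set. -/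
def KLambdaSet (S : Set (Sp κ A)) : Prop :=
  ∀ B ⊆ S, #B ≤ κ → ∃ G : I κ → Set (Sp κ A),
    (∀ i, OpenK κ A (G i)) ∧ (⋂ i, G i) ∩ S = B

/-- κ-σ-set. -/
def KSigmaSet (S : Set (Sp κ A)) : Prop :=
  ∀ F : I κ → Set (Sp κ A), (∀ i, ClosedK κ A (F i)) →
    ∃ G : I κ → Set (Sp κ A), (∀ i, OpenK κ A (G i)) ∧
      S ∩ (⋃ i, F i) = S ∩ (⋂ i, G i)

/-- κ-γ-set: every open (proper) κ-cover contains a κ-γ-subcover of size κ. -/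
def KGammaSet (X : Set (Sp κ A)) : Prop :=
  ∀ 𝒰 : Set (Set (Sp κ A)), (∀ U ∈ 𝒰, OpenK κ A U) → X ∉ 𝒰 →
    (∀ C ⊆ X, #C < κ → ∃ U ∈ 𝒰, C ⊆ U) →
    ∃ U : I κ → Set (Sp κ A), (∀ α, U α ∈ 𝒰) ∧
      X ⊆ ⋃ α, ⋂ β, ⋂ (_ : α < β), U β

/-- A (proper) open cover of `X` of size κ, indexed by `I κ`. -/
def IsOCovSeq (X : Set (Sp κ A)) (U : I κ → Set (Sp κ A)) : Prop :=
  (∀ α, OpenK κ A (U α)) ∧ (∀ α, U α ≠ X) ∧ X ⊆ ⋃ α, U α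

/-- A (proper) κ-γ-cover of `X`, indexed by `I κ`. -/
def IsGammaCovSeq (X : Set (Sp κ A)) (U : I κ → Set (Sp κ A)) : Prop :=
  (∀ α, OpenK κ A (U α)) ∧ (∀ α, U α ≠ X) ∧
    X ⊆ ⋃ α, ⋂ β, ⋂ (_ : α < β), U β

/-- The cover `U` is essentially of size κ: no subfamily of size `< κ` covers `X`. -/
def EssK (X : Set (Sp κ A)) (U : I κ → Set (Sp κ A)) : Prop :=
  ∀ s : Set (I κ), #s < κ → ¬ X ⊆ ⋃ β ∈ s, U β

/-- The selection principle `S₁^κ(Γ_κ, Γ_κ)`. -/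
def S1GammaGamma (X : Set (Sp κ A)) : Prop :=
  ∀ 𝒰 : I κ → I κ → Set (Sp κ A), (∀ α, IsGammaCovSeq κ A X (𝒰 α)) →
    ∃ f : I κ → I κ, IsGammaCovSeq κ A X (fun α => 𝒰 α (f α))

/-- The κ-Hurewicz property `U^κ_{<κ}(O_κ, Γ_κ)`. -/
def KHurewicz (X : Set (Sp κ A)) : Prop :=
  ∀ 𝒰 : I κ → I κ → Set (Sp κ A), (∀ α, IsOCovSeq κ A X (𝒰 α)) →
    (∀ α, EssK κ A X (𝒰 α)) →
    ∃ V : I κ → Set (I κ), (∀ α, #(V α) < κ) ∧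
      IsGammaCovSeq κ A X (fun α => ⋃ β ∈ V α, 𝒰 α β)

/-- The κ-Menger property `U^κ_{<κ}(O_κ, O_κ)`. -/
def KMenger (X : Set (Sp κ A)) : Prop :=
  ∀ 𝒰 : I κ → I κ → Set (Sp κ A), (∀ α, IsOCovSeq κ A X (𝒰 α)) →
    (∀ α, EssK κ A X (𝒰 α)) →
    ∃ V : I κ → Set (I κ), (∀ α, #(V α) < κ) ∧
      IsOCovSeq κ A X (fun α => ⋃ β ∈ V α, 𝒰 α β)

/-- The κ-Rothberger property `S₁^κ(O_κ, O_κ)`. -/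
def KRothberger (X : Set (Sp κ A)) : Prop :=
  ∀ 𝒰 : I κ → I κ → Set (Sp κ A), (∀ α, IsOCovSeq κ A X (𝒰 α)) →
    ∃ f : I κ → I κ, IsOCovSeq κ A X (fun α => 𝒰 α (f α))

/-- Closed unbounded subset of `I κ`. -/
def IsClubK (S : Set (I κ)) : Prop :=
  (∀ a : I κ, ∃ b ∈ S, a < b) ∧
  (∀ a : I κ, (∃ b, b < a) → (∀ b < a, ∃ c ∈ S, b < c ∧ c < a) → a ∈ S)

/-- Stationary subset of `I κ`. -/
def IsStatK (S : Set (I κ)) : Prop :=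
  ∀ C : Set (I κ), IsClubK κ C → (S ∩ C).Nonempty

/-- The diamond principle `◇_κ(E)`. -/
def DiamondK (E : Set (I κ)) : Prop :=
  ∃ s : I κ → Set (I κ), (∀ α, s α ⊆ Iio α) ∧
    ∀ X : Set (I κ), IsStatK κ {α | α ∈ E ∧ X ∩ Iio α = s α}

/-- The guessing principle `◇_κ(E, 2^κ, NS_κ)`. -/
def DiamondFunK (E : Set (I κ)) : Prop :=
  ∃ s : I κ → Sp κ Bool,
    ∀ x : Sp κ Bool, IsStatK κ {α | α ∈ E ∧ ∀ β < α, x β = s α β}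

/-- `S` is `X`-small. -/
def XSmall (X : Set (I κ)) (S : Set (Sp κ A)) : Prop :=
  ∃ a : I κ → Sp κ A, S ⊆ ⋃ α ∈ X, cyl κ A (a α) α

/-- `S` is small in `A^κ`. -/
def SmallK (S : Set (Sp κ A)) : Prop :=
  ∃ lam : Cardinal, lam < κ ∧ ∀ α : I κ, ∃ T : Set (Sp κ A),
    #T ≤ lam ∧ S ⊆ ⋃ x ∈ T, cyl κ A x α

/-
Every coordinate `x ↦ x α` is constant on each basic set `[x ↾ ξ]` with `ξ > α`, hence locally
constant, so `A_X`, an intersection of level sets of coordinates, is closed. It is not κ-strongly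
null by diagonalisation: enumerate `X` as `⟨e α⟩_{α<κ}` and take `ξ_α > e α`; given `⟨a_α⟩`, the
point of `A_X` whose `e α`-th coordinate differs from `a_α (e α)` lies in none of the sets
`[a_α ↾ ξ_α]`.
-/

variable {κ A}

theorem openK_cyl (x : Sp κ A) (ξ : I κ) : OpenK κ A (cyl κ A x ξ) :=
  TopologicalSpace.GenerateOpen.basic _ ⟨x, ξ, rfl⟩

theorem mem_cyl_self (x : Sp κ A) (ξ : I κ) : x ∈ cyl κ A x ξ := fun _ _ => rfl

section NoMax

variable [NoMaxOrder (I κ)]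

theorem openK_setOf_apply_mem (α : I κ) (U : Set A) : OpenK κ A {x | x α ∈ U} := by
  let := bt κ A
  refine isOpen_iff_forall_mem_open.2 fun x hx => ?_
  obtain ⟨ξ, hαξ⟩ := exists_gt α
  refine ⟨cyl κ A x ξ, fun y hy => ?_, openK_cyl x ξ, mem_cyl_self x ξ⟩
  simpa [hy α hαξ] using hx

theorem closedK_setOf_forall_eq (S : Set (I κ)) (c : A) :
    ClosedK κ A {x | ∀ α ∈ S, x α = c} := by
  let := bt κ A
  have hrepr : {x : Sp κ A | ∀ α ∈ S, x α = c} = ⋂ α ∈ S, {x | x α ∈ ({c}ᶜ : Set A)}ᶜ := by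
    ext x; simp
  rw [ClosedK, hrepr]
  exact isClosed_biInter fun α _ => (openK_setOf_apply_mem α _).isClosed_compl

theorem not_sNullK_setOf_forall_notMem_eq [Nontrivial A] (S : Set (I κ)) (hS : #S = κ)
    (c : A) : ¬ SNullK κ A {x | ∀ α ∉ S, x α = c} := by
  classical
  intro hnull
  obtain ⟨e⟩ : Nonempty (I κ ≃ S) := Cardinal.eq.1 (by rw [hS, mk_toType, card_ord])
  choose ξ hξ using fun α : I κ => exists_gt (e α : I κ)
  choose other hother using fun a : A => exists_ne a
  obtain ⟨a, hcover⟩ := hnull ξ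
  let x : Sp κ A := fun β => if h : β ∈ S then other (a (e.symm ⟨β, h⟩) β) else c
  have hx : x ∈ {x : Sp κ A | ∀ α ∉ S, x α = c} := fun β hβ => dif_neg hβ
  obtain ⟨α, hα⟩ := Set.mem_iUnion.1 (hcover hx)
  have hdiag : x (e α) = other (a α (e α)) := by simp [x]
  exact hother _ (hdiag ▸ hα (e α) (hξ α))

end NoMax

theorem stmt4 (κ : Cardinal.{0}) (hinacc : κ.IsInaccessible)
    (X : Set (I κ)) (hX : #X = κ) :
    ClosedK κ Bool {x : Sp κ Bool | ∀ α ∉ X, x α = false} ∧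
      ¬ SNullK κ Bool {x : Sp κ Bool | ∀ α ∉ X, x α = false} := by
  have := noMaxOrder hinacc.aleph0_lt.le
  exact ⟨closedK_setOf_forall_eq Xᶜ false, not_sNullK_setOf_forall_notMem_eq X hX false⟩

end GenSp
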